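/- Given a constant specification CS for JTO such that CS^O = ∅, the strong no-conflicts principle fails in interpreted-neighborhood semantics: there exist a formula φ, deontic terms s, t ∈ Tm^O and an agent i such that not ⊨^N_CS O[s]_i φ → P[t]_i φ; equivalently, there is an interpreted-neighborhood system for JTO_CS and a point satisfying O[s]_i φ ∧ O[t]_i ¬φ. -/

import Mathlib

namespace JTO

/-- Epistemic justification terms. -/
inductive TmE (Const Var : Type) : Type
  | const : Const → TmE Const Var
  | var   : Var → TmE Const Var
  | bang  : TmE Const Var → TmE Const Var
  | plus  : TmE Const Var → TmE Const Var → TmE Const Var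
  | times : TmE Const Var → TmE Const Var → TmE Const Var

/-- Deontic (normative) justification terms. -/
inductive TmO (Const Var : Type) : Type
  | const : Const → TmO Const Var
  | var   : Var → TmO Const Var
  | ddag  : TmO Const Var → TmO Const Var
  | times : TmO Const Var → TmO Const Var → TmO Const Var

/-- Formulas of the logic JTO. -/
inductive Fm (Ag Const Var Atom : Type) : Type
  | atom  : Atom → Fm Ag Const Var Atom
  | bot   : Fm Ag Const Var Atom
  | imp   : Fm Ag Const Var Atom → Fm Ag Const Var Atom → Fm Ag Const Var Atom
  | next  : Fm Ag Const Var Atom → Fm Ag Const Var Atom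
  | wprev : Fm Ag Const Var Atom → Fm Ag Const Var Atom
  | untl  : Fm Ag Const Var Atom → Fm Ag Const Var Atom → Fm Ag Const Var Atom
  | snce  : Fm Ag Const Var Atom → Fm Ag Const Var Atom → Fm Ag Const Var Atom
  | jbox  : Ag → TmE Const Var → Fm Ag Const Var Atom → Fm Ag Const Var Atom
  | obox  : Ag → TmO Const Var → Fm Ag Const Var Atom → Fm Ag Const Var Atom

namespace Fm

variable {Ag Const Var Atom : Type}

/-- ¬φ := φ → ⊥ -/
def neg (φ : Fm Ag Const Var Atom) : Fm Ag Const Var Atom := φ.imp bot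
/-- ⊤ := ¬⊥ -/
def top : Fm Ag Const Var Atom := neg bot
/-- φ ∨ ψ := ¬φ → ψ -/
def disj (φ ψ : Fm Ag Const Var Atom) : Fm Ag Const Var Atom := (neg φ).imp ψ
/-- φ ∧ ψ := ¬(¬φ ∨ ¬ψ) -/
def conj (φ ψ : Fm Ag Const Var Atom) : Fm Ag Const Var Atom := neg (disj (neg φ) (neg ψ))
/-- φ ↔ ψ := (φ→ψ) ∧ (ψ→φ) -/
def biim (φ ψ : Fm Ag Const Var Atom) : Fm Ag Const Var Atom := conj (φ.imp ψ) (ψ.imp φ)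
/-- strong previous ⊙ₛφ := ¬⊙_w¬φ -/
def sprev (φ : Fm Ag Const Var Atom) : Fm Ag Const Var Atom := neg (wprev (neg φ))
/-- eventually ◇φ := ⊤ U φ -/
def ev (φ : Fm Ag Const Var Atom) : Fm Ag Const Var Atom := untl top φ
/-- always (henceforth) □φ := ¬◇¬φ -/
def alw (φ : Fm Ag Const Var Atom) : Fm Ag Const Var Atom := neg (ev (neg φ))
/-- once ◇⁻φ := ⊤ S φ -/
def once (φ : Fm Ag Const Var Atom) : Fm Ag Const Var Atom := snce top φ
/-- has-always-been □⁻φ := ¬◇⁻¬φ -/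
def sofar (φ : Fm Ag Const Var Atom) : Fm Ag Const Var Atom := neg (once (neg φ))
/-- ⊡φ := □⁻φ ∧ □φ -/
def boxdot (φ : Fm Ag Const Var Atom) : Fm Ag Const Var Atom := conj (sofar φ) (alw φ)
/-- weak until (unless) φ W ψ := (φ U ψ) ∨ □φ -/
def wuntl (φ ψ : Fm Ag Const Var Atom) : Fm Ag Const Var Atom := disj (untl φ ψ) (alw φ)
/-- permission P[s]ᵢφ := ¬O[s]ᵢ¬φ -/
def pbox (i : Ag) (t : TmO Const Var) (φ : Fm Ag Const Var Atom) : Fm Ag Const Var Atom :=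
  neg (obox i t (neg φ))
/-- time = m, i.e. ⊙ₛ^m ⊙_w ⊥ -/
def timeEq : ℕ → Fm Ag Const Var Atom
  | 0 => wprev bot
  | m + 1 => sprev (timeEq m)
/-- true_m(φ) := ⊡(time=m → φ) -/
def trueAt (m : ℕ) (φ : Fm Ag Const Var Atom) : Fm Ag Const Var Atom :=
  boxdot ((timeEq m).imp φ)

/-- Subformulas. -/
def subf : Fm Ag Const Var Atom → Set (Fm Ag Const Var Atom)
  | atom p => {atom p}
  | bot => {bot}
  | imp φ ψ => insert (imp φ ψ) (subf φ ∪ subf ψ)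
  | next φ => insert (next φ) (subf φ)
  | wprev φ => insert (wprev φ) (subf φ)
  | untl φ ψ => insert (untl φ ψ) (subf φ ∪ subf ψ)
  | snce φ ψ => insert (snce φ ψ) (subf φ ∪ subf ψ)
  | jbox i t φ => insert (jbox i t φ) (subf φ)
  | obox i t φ => insert (obox i t φ) (subf φ)

/-- Subf⁺(χ) := A_χ ∪ {¬ψ : ψ ∈ A_χ}, with A_χ = Subf(χ) ∪ Subf(⊤ S ⊙_w⊥). -/
def subfPlus (χ : Fm Ag Const Var Atom) : Set (Fm Ag Const Var Atom) :=
  (subf χ ∪ subf (snce top (wprev bot))) ∪ neg '' (subf χ ∪ subf (snce top (wprev bot)))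

end Fm

variable {Ag Const Var Atom : Type}

/-- Propositional tautologies in the language of JTO. -/
def Taut (φ : Fm Ag Const Var Atom) : Prop :=
  ∀ v : Fm Ag Const Var Atom → Bool,
    v Fm.bot = false → (∀ a b, v (a.imp b) = (!(v a) || v b)) → v φ = true

/-- The axioms of JTO. -/
inductive IsAxiom : Fm Ag Const Var Atom → Prop
  | taut {φ : Fm Ag Const Var Atom} : Taut φ → IsAxiom φ
  | nextK (φ ψ : Fm Ag Const Var Atom) :
      IsAxiom ((Fm.next (φ.imp ψ)).imp ((Fm.next φ).imp (Fm.next ψ)))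
  | alwK (φ ψ : Fm Ag Const Var Atom) :
      IsAxiom ((Fm.alw (φ.imp ψ)).imp ((Fm.alw φ).imp (Fm.alw ψ)))
  | fn (φ : Fm Ag Const Var Atom) :
      IsAxiom (Fm.biim (Fm.next (Fm.neg φ)) (Fm.neg (Fm.next φ)))
  | ind (φ : Fm Ag Const Var Atom) :
      IsAxiom ((Fm.alw (φ.imp (Fm.next φ))).imp (φ.imp (Fm.alw φ)))
  | untl1 (φ ψ : Fm Ag Const Var Atom) :
      IsAxiom ((Fm.untl φ ψ).imp (Fm.ev ψ))
  | untl2 (φ ψ : Fm Ag Const Var Atom) :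
      IsAxiom (Fm.biim (Fm.untl φ ψ) (Fm.disj ψ (Fm.conj φ (Fm.next (Fm.untl φ ψ)))))
  | sofarK (φ ψ : Fm Ag Const Var Atom) :
      IsAxiom ((Fm.sofar (φ.imp ψ)).imp ((Fm.sofar φ).imp (Fm.sofar ψ)))
  | wprevK (φ ψ : Fm Ag Const Var Atom) :
      IsAxiom ((Fm.wprev (φ.imp ψ)).imp ((Fm.wprev φ).imp (Fm.wprev ψ)))
  | sw (φ : Fm Ag Const Var Atom) : IsAxiom ((Fm.sprev φ).imp (Fm.wprev φ))
  | initial : IsAxiom (Fm.once (Fm.wprev (Fm.bot : Fm Ag Const Var Atom)))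
  | sofarInd (φ : Fm Ag Const Var Atom) :
      IsAxiom ((Fm.sofar (φ.imp (Fm.wprev φ))).imp (φ.imp (Fm.sofar φ)))
  | snce1 (φ ψ : Fm Ag Const Var Atom) : IsAxiom ((Fm.snce φ ψ).imp (Fm.once ψ))
  | snce2 (φ ψ : Fm Ag Const Var Atom) :
      IsAxiom (Fm.biim (Fm.snce φ ψ) (Fm.disj ψ (Fm.conj φ (Fm.sprev (Fm.snce φ ψ)))))
  | fp (φ : Fm Ag Const Var Atom) : IsAxiom (φ.imp (Fm.next (Fm.sprev φ)))
  | pf (φ : Fm Ag Const Var Atom) : IsAxiom (φ.imp (Fm.wprev (Fm.next φ)))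
  | app (i : Ag) (t s : TmE Const Var) (φ ψ : Fm Ag Const Var Atom) :
      IsAxiom ((Fm.jbox i t (φ.imp ψ)).imp ((Fm.jbox i s φ).imp (Fm.jbox i (TmE.times t s) ψ)))
  | sum1 (i : Ag) (t s : TmE Const Var) (φ : Fm Ag Const Var Atom) :
      IsAxiom ((Fm.jbox i t φ).imp (Fm.jbox i (TmE.plus t s) φ))
  | sum2 (i : Ag) (t s : TmE Const Var) (φ : Fm Ag Const Var Atom) :
      IsAxiom ((Fm.jbox i s φ).imp (Fm.jbox i (TmE.plus t s) φ))
  | fact (i : Ag) (t : TmE Const Var) (φ : Fm Ag Const Var Atom) :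
      IsAxiom ((Fm.jbox i t φ).imp φ)
  | pos (i : Ag) (t : TmE Const Var) (φ : Fm Ag Const Var Atom) :
      IsAxiom ((Fm.jbox i t φ).imp (Fm.jbox i (TmE.bang t) (Fm.jbox i t φ)))
  | appO (i : Ag) (t s : TmO Const Var) (φ ψ : Fm Ag Const Var Atom) :
      IsAxiom ((Fm.obox i t (φ.imp ψ)).imp ((Fm.obox i s φ).imp (Fm.obox i (TmO.times t s) ψ)))
  | noc (i : Ag) (t : TmO Const Var) (φ : Fm Ag Const Var Atom) :
      IsAxiom ((Fm.obox i t φ).imp (Fm.pbox i t φ))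
  | ofact (i : Ag) (t : TmO Const Var) (φ : Fm Ag Const Var Atom) :
      IsAxiom (Fm.obox i (TmO.ddag t) ((Fm.obox i t φ).imp φ))

/-- Formulas of the shape [c_{j_n}]_{i_n} … [c_{j_1}]_{i_1} φ with φ an axiom instance, n ≥ 1. -/
inductive EIter : Fm Ag Const Var Atom → Prop
  | base {i : Ag} {c : Const} {φ : Fm Ag Const Var Atom} :
      IsAxiom φ → EIter (Fm.jbox i (TmE.const c) φ)
  | step {i : Ag} {c : Const} {φ : Fm Ag Const Var Atom} :
      EIter φ → EIter (Fm.jbox i (TmE.const c) φ)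

/-- Formulas of the shape O[c_{j_n}]_{i_n} … O[c_{j_1}]_{i_1} φ with φ an axiom instance, n ≥ 1. -/
inductive OIter : Fm Ag Const Var Atom → Prop
  | base {i : Ag} {c : Const} {φ : Fm Ag Const Var Atom} :
      IsAxiom φ → OIter (Fm.obox i (TmO.const c) φ)
  | step {i : Ag} {c : Const} {φ : Fm Ag Const Var Atom} :
      OIter φ → OIter (Fm.obox i (TmO.const c) φ)

/-- A constant specification: a downward closed set of iterated constant-justification
assertions of axiom instances. -/
structure ConstSpec (Ag Const Var Atom : Type) where
  set : Set (Fm Ag Const Var Atom)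
  shape : ∀ φ ∈ set, EIter φ ∨ OIter φ
  dcE : ∀ (i : Ag) (c : Const) (φ : Fm Ag Const Var Atom),
    Fm.jbox i (TmE.const c) φ ∈ set → EIter φ → φ ∈ set
  dcO : ∀ (i : Ag) (c : Const) (φ : Fm Ag Const Var Atom),
    Fm.obox i (TmO.const c) φ ∈ set → OIter φ → φ ∈ set

/-- CS^E : the epistemic part of a constant specification. -/
def ConstSpec.csE (CS : ConstSpec Ag Const Var Atom) : Set (Fm Ag Const Var Atom) :=
  {φ ∈ CS.set | EIter φ}

/-- CS^O : the deontic part of a constant specification. -/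
def ConstSpec.csO (CS : ConstSpec Ag Const Var Atom) : Set (Fm Ag Const Var Atom) :=
  {φ ∈ CS.set | OIter φ}

/-- Derivability in the Hilbert system JTO_CS. -/
inductive Deriv (CS : ConstSpec Ag Const Var Atom) : Fm Ag Const Var Atom → Prop
  | ax {φ : Fm Ag Const Var Atom} : IsAxiom φ → Deriv CS φ
  | mp {φ ψ : Fm Ag Const Var Atom} : Deriv CS (φ.imp ψ) → Deriv CS φ → Deriv CS ψ
  | necNext {φ : Fm Ag Const Var Atom} : Deriv CS φ → Deriv CS (Fm.next φ)
  | necWPrev {φ : Fm Ag Const Var Atom} : Deriv CS φ → Deriv CS (Fm.wprev φ)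
  | necAlw {φ : Fm Ag Const Var Atom} : Deriv CS φ → Deriv CS (Fm.alw φ)
  | necSofar {φ : Fm Ag Const Var Atom} : Deriv CS φ → Deriv CS (Fm.sofar φ)
  | csax {φ : Fm Ag Const Var Atom} : φ ∈ CS.set → Deriv CS φ

/-- Conjunction of a list of formulas. -/
def conjList : List (Fm Ag Const Var Atom) → Fm Ag Const Var Atom
  | [] => Fm.top
  | φ :: l => Fm.conj φ (conjList l)

/-- T ⊢_CS φ iff ⊢_CS (ψ₁ ∧ … ∧ ψ_n) → φ for some ψ₁, …, ψ_n ∈ T. -/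
def DerivFrom (CS : ConstSpec Ag Const Var Atom) (T : Set (Fm Ag Const Var Atom))
    (φ : Fm Ag Const Var Atom) : Prop :=
  ∃ L : List (Fm Ag Const Var Atom), (∀ ψ ∈ L, ψ ∈ T) ∧ Deriv CS ((conjList L).imp φ)

/-- A set of formulas is consistent if it does not derive ⊥. -/
def Consistent (CS : ConstSpec Ag Const Var Atom) (T : Set (Fm Ag Const Var Atom)) : Prop :=
  ¬ DerivFrom CS T Fm.bot

end JTO
namespace JTO

variable {Ag Const Var Atom : Type}

/-- The data of an F-interpreted system (Fitting-style), without conditions. -/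
structure FQuasi (Ag Const Var Atom S : Type) where
  R : Set (ℕ → S)
  K : Ag → S → S → Prop
  KO : Ag → S → S → Prop
  E : Ag → S → TmE Const Var → Set (Fm Ag Const Var Atom)
  EO : Ag → S → TmO Const Var → Set (Fm Ag Const Var Atom)
  val : S → Set Atom

/-- Truth at a point (r, n) of an F-interpreted system. -/
def FQuasi.Sat {S : Type} (I : FQuasi Ag Const Var Atom S) :
    Fm Ag Const Var Atom → (ℕ → S) → ℕ → Prop
  | .atom p, r, n => p ∈ I.val (r n)
  | .bot, _, _ => False
  | .imp φ ψ, r, n => I.Sat φ r n → I.Sat ψ r n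
  | .next φ, r, n => I.Sat φ r (n + 1)
  | .wprev φ, r, n => n = 0 ∨ I.Sat φ r (n - 1)
  | .untl φ ψ, r, n => ∃ m, n ≤ m ∧ I.Sat ψ r m ∧ ∀ k, n ≤ k → k < m → I.Sat φ r k
  | .snce φ ψ, r, n => ∃ m, m ≤ n ∧ I.Sat ψ r m ∧ ∀ k, m < k → k ≤ n → I.Sat φ r k
  | .jbox i t φ, r, n =>
      φ ∈ I.E i (r n) t ∧ ∀ r' ∈ I.R, ∀ n' : ℕ, I.K i (r n) (r' n') → I.Sat φ r' n'
  | .obox i t φ, r, n =>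
      φ ∈ I.EO i (r n) t ∧ ∀ r' ∈ I.R, ∀ n' : ℕ, I.KO i (r n) (r' n') → I.Sat φ r' n'

/-- An F-interpreted system for JTO_CS. -/
structure FIS (Ag Const Var Atom S : Type) (CS : ConstSpec Ag Const Var Atom)
    extends FQuasi Ag Const Var Atom S where
  Sne : Nonempty S
  Rne : R.Nonempty
  Krefl : ∀ (i : Ag) (w : S), K i w w
  Ktrans : ∀ (i : Ag) (u v w : S), K i u v → K i v w → K i u w
  KOshift : ∀ (i : Ag) (w v : S), KO i w v → KO i v v
  Emono : ∀ (i : Ag) (v w : S) (t : TmE Const Var), K i v w → E i v t ⊆ E i w t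
  Ecs : ∀ (i : Ag) (w : S) (t : TmE Const Var) (φ : Fm Ag Const Var Atom),
    Fm.jbox i t φ ∈ CS.csE → φ ∈ E i w t
  Eapp : ∀ (i : Ag) (w : S) (t s : TmE Const Var) (φ ψ : Fm Ag Const Var Atom),
    φ.imp ψ ∈ E i w t → φ ∈ E i w s → ψ ∈ E i w (TmE.times t s)
  Epos : ∀ (i : Ag) (w : S) (t : TmE Const Var) (φ : Fm Ag Const Var Atom),
    φ ∈ E i w t → Fm.jbox i t φ ∈ E i w (TmE.bang t)
  EOcs : ∀ (i : Ag) (w : S) (t : TmO Const Var) (φ : Fm Ag Const Var Atom),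
    Fm.obox i t φ ∈ CS.csO → φ ∈ EO i w t
  EOapp : ∀ (i : Ag) (w : S) (t s : TmO Const Var) (φ ψ : Fm Ag Const Var Atom),
    φ.imp ψ ∈ EO i w t → φ ∈ EO i w s → ψ ∈ EO i w (TmO.times t s)
  EOcons : ∀ (i : Ag) (w : S) (t : TmO Const Var) (φ : Fm Ag Const Var Atom),
    φ ∈ EO i w t → Fm.neg φ ∉ EO i w t
  EOfact : ∀ (i : Ag) (w : S) (t : TmO Const Var) (φ : Fm Ag Const Var Atom),
    (Fm.obox i t φ).imp φ ∈ EO i w (TmO.ddag t)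

/-- Truth at a point of an F-interpreted system. -/
abbrev FIS.Sat {S : Type} {CS : ConstSpec Ag Const Var Atom}
    (I : FIS Ag Const Var Atom S CS) :
    Fm Ag Const Var Atom → (ℕ → S) → ℕ → Prop :=
  I.toFQuasi.Sat

/-- I ⊨ φ : truth at every point of the system. -/
def FIS.Valid {S : Type} {CS : ConstSpec Ag Const Var Atom}
    (I : FIS Ag Const Var Atom S CS) (φ : Fm Ag Const Var Atom) : Prop :=
  ∀ r ∈ I.R, ∀ n : ℕ, I.Sat φ r n

/-- ⊨_CS φ : validity in all F-interpreted systems for JTO_CS. -/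
def FValid (CS : ConstSpec Ag Const Var Atom) (φ : Fm Ag Const Var Atom) : Prop :=
  ∀ (S : Type) (I : FIS Ag Const Var Atom S CS), I.Valid φ

/-- T ⊨_CS φ : the local consequence relation over F-interpreted systems. -/
def FConseq (CS : ConstSpec Ag Const Var Atom) (T : Set (Fm Ag Const Var Atom))
    (φ : Fm Ag Const Var Atom) : Prop :=
  ∀ (S : Type) (I : FIS Ag Const Var Atom S CS), ∀ r ∈ I.R, ∀ n : ℕ,
    (∀ ψ ∈ T, I.Sat ψ r n) → I.Sat φ r n

/-- Maximal consistent sets of formulas. -/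
def MCS (CS : ConstSpec Ag Const Var Atom) : Set (Set (Fm Ag Const Var Atom)) :=
  {Γ | Consistent CS Γ ∧ ∀ Δ, Γ ⊂ Δ → ¬ Consistent CS Δ}

/-- χ-maximal consistent subsets of Subf⁺(χ). -/
def MCSx (CS : ConstSpec Ag Const Var Atom) (χ : Fm Ag Const Var Atom) :
    Set (Set (Fm Ag Const Var Atom)) :=
  {X | X ⊆ Fm.subfPlus χ ∧ Consistent CS X ∧
    ∀ Y, Y ⊆ Fm.subfPlus χ → X ⊂ Y → ¬ Consistent CS Y}

/-- The relation R_○ on MCS_χ (given by witnessing maximal consistent sets). -/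
def Rnext (CS : ConstSpec Ag Const Var Atom) (χ : Fm Ag Const Var Atom)
    (X Y : Set (Fm Ag Const Var Atom)) : Prop :=
  ∃ Γ ∈ MCS CS, ∃ Δ ∈ MCS CS, X = Γ ∩ Fm.subfPlus χ ∧ Y = Δ ∩ Fm.subfPlus χ ∧
    {φ | Fm.next φ ∈ Γ} ⊆ Δ

/-- Acceptable sequences of elements of MCS_χ. -/
def Acceptable (CS : ConstSpec Ag Const Var Atom) (χ : Fm Ag Const Var Atom)
    (X : ℕ → Set (Fm Ag Const Var Atom)) : Prop :=
  (∀ n, X n ∈ MCSx CS χ) ∧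
  (∀ n, Rnext CS χ (X n) (X (n + 1))) ∧
  (∀ n (φ ψ : Fm Ag Const Var Atom), Fm.untl φ ψ ∈ X n →
    ∃ m, n ≤ m ∧ ψ ∈ X m ∧ ∀ k, n ≤ k → k < m → φ ∈ X k) ∧
  Fm.wprev Fm.bot ∈ X 0

/-- The canonical epistemic accessibility relation. -/
def canK (CS : ConstSpec Ag Const Var Atom) (χ : Fm Ag Const Var Atom) (i : Ag)
    (X Y : Set (Fm Ag Const Var Atom)) : Prop :=
  ∀ Δ ∈ MCS CS, Y = Δ ∩ Fm.subfPlus χ →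
    ∃ Γ ∈ MCS CS, X = Γ ∩ Fm.subfPlus χ ∧
      {φ | ∃ t : TmE Const Var, Fm.jbox i t φ ∈ Γ} ⊆ Δ

/-- The canonical evidence function. -/
def canE (CS : ConstSpec Ag Const Var Atom) (χ : Fm Ag Const Var Atom) (i : Ag)
    (X : Set (Fm Ag Const Var Atom)) (t : TmE Const Var) : Set (Fm Ag Const Var Atom) :=
  {φ | ∀ Γ ∈ MCS CS, X = Γ ∩ Fm.subfPlus χ → Fm.jbox i t φ ∈ Γ}

/-- The canonical deontic accessibility relation. -/
def canKO (CS : ConstSpec Ag Const Var Atom) (χ : Fm Ag Const Var Atom) (i : Ag)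
    (X Y : Set (Fm Ag Const Var Atom)) : Prop :=
  ∃ Γ ∈ MCS CS, ∃ Δ ∈ MCS CS, X = Γ ∩ Fm.subfPlus χ ∧ Y = Δ ∩ Fm.subfPlus χ ∧
    {φ | ∃ t : TmO Const Var, Fm.obox i t φ ∈ Γ} ⊆ Δ

/-- The canonical normative evidence function. -/
def canEO (CS : ConstSpec Ag Const Var Atom) (χ : Fm Ag Const Var Atom) (i : Ag)
    (X : Set (Fm Ag Const Var Atom)) (t : TmO Const Var) : Set (Fm Ag Const Var Atom) :=
  {φ | ∀ Γ ∈ MCS CS, X = Γ ∩ Fm.subfPlus χ → Fm.obox i t φ ∈ Γ}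

/-- The χ-canonical F-interpreted system (as structured data). -/
def canFQuasi (CS : ConstSpec Ag Const Var Atom) (χ : Fm Ag Const Var Atom) :
    FQuasi Ag Const Var Atom ↥(MCSx CS χ) where
  R := {r | Acceptable CS χ (fun n => ((r n : Set (Fm Ag Const Var Atom))))}
  K := fun i X Y => canK CS χ i X.1 Y.1
  KO := fun i X Y => canKO CS χ i X.1 Y.1
  E := fun i X t => canE CS χ i X.1 t
  EO := fun i X t => canEO CS χ i X.1 t
  val := fun X => {p | Fm.atom p ∈ X.1}

end JTO
namespace JTO

variable {Ag Const Var Atom : Type}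

/-- The data of a quasi-interpreted-neighborhood system. -/
structure NQuasi (Ag Const Var Atom S : Type) where
  R : Set (ℕ → S)
  N : Ag → S → TmE Const Var → Set (Set S)
  NO : Ag → S → TmO Const Var → Set (Set S)
  val : S → Set Atom
  valF : S → Set (Fm Ag Const Var Atom)

/-- The image Im(R) of the system of runs. -/
def NQuasi.Im {S : Type} (I : NQuasi Ag Const Var Atom S) : Set S :=
  {w | ∃ r ∈ I.R, ∃ n : ℕ, r n = w}

/-- Truth at a point (r, n) of a quasi-interpreted-neighborhood system. -/
def NQuasi.SatP {S : Type} (I : NQuasi Ag Const Var Atom S) :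
    Fm Ag Const Var Atom → (ℕ → S) → ℕ → Prop
  | .atom p, r, n => p ∈ I.val (r n)
  | .bot, _, _ => False
  | .imp φ ψ, r, n => I.SatP φ r n → I.SatP ψ r n
  | .next φ, r, n => I.SatP φ r (n + 1)
  | .wprev φ, r, n => n = 0 ∨ I.SatP φ r (n - 1)
  | .untl φ ψ, r, n => ∃ m, n ≤ m ∧ I.SatP ψ r m ∧ ∀ k, n ≤ k → k < m → I.SatP φ r k
  | .snce φ ψ, r, n => ∃ m, m ≤ n ∧ I.SatP ψ r m ∧ ∀ k, m < k → k ≤ n → I.SatP φ r k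
  | .jbox i t φ, r, n =>
      {w | (∃ r' ∈ I.R, ∃ n' : ℕ, r' n' = w ∧ I.SatP φ r' n') ∨
            (w ∉ I.Im ∧ φ ∈ I.valF w)} ∈ I.N i (r n) t
  | .obox i t φ, r, n =>
      {w | (∃ r' ∈ I.R, ∃ n' : ℕ, r' n' = w ∧ I.SatP φ r' n') ∨
            (w ∉ I.Im ∧ φ ∈ I.valF w)} ∈ I.NO i (r n) t

/-- Truth at a state of a quasi-interpreted-neighborhood system. -/
def NQuasi.SatS {S : Type} (I : NQuasi Ag Const Var Atom S)
    (φ : Fm Ag Const Var Atom) (w : S) : Prop :=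
  (∃ r ∈ I.R, ∃ n : ℕ, r n = w ∧ I.SatP φ r n) ∨ (w ∉ I.Im ∧ φ ∈ I.valF w)

/-- The truth set ⟦φ⟧ of a formula. -/
def NQuasi.tset {S : Type} (I : NQuasi Ag Const Var Atom S)
    (φ : Fm Ag Const Var Atom) : Set S :=
  {w | I.SatS φ w}

/-- An interpreted-neighborhood system for JTO_CS. -/
structure NIS (Ag Const Var Atom S : Type) (CS : ConstSpec Ag Const Var Atom)
    extends NQuasi Ag Const Var Atom S where
  Sne : Nonempty S
  Rne : R.Nonempty
  Ncs : ∀ (i : Ag) (t : TmE Const Var) (φ : Fm Ag Const Var Atom),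
    Fm.jbox i t φ ∈ CS.csE → ∀ w ∈ toNQuasi.Im, toNQuasi.tset φ ∈ N i w t
  Napp : ∀ (i : Ag), ∀ w ∈ toNQuasi.Im, ∀ (t s : TmE Const Var) (φ ψ : Fm Ag Const Var Atom),
    toNQuasi.tset (φ.imp ψ) ∈ N i w t → toNQuasi.tset φ ∈ N i w s →
      toNQuasi.tset ψ ∈ N i w (TmE.times t s)
  Nsum : ∀ (i : Ag), ∀ w ∈ toNQuasi.Im, ∀ (t s : TmE Const Var) (φ : Fm Ag Const Var Atom),
    toNQuasi.tset φ ∈ N i w s →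
      toNQuasi.tset φ ∈ N i w (TmE.plus t s) ∧ toNQuasi.tset φ ∈ N i w (TmE.plus s t)
  Nrefl : ∀ (i : Ag), ∀ w ∈ toNQuasi.Im, ∀ (t : TmE Const Var) (φ : Fm Ag Const Var Atom),
    toNQuasi.tset φ ∈ N i w t → w ∈ toNQuasi.tset φ
  Npos : ∀ (i : Ag), ∀ w ∈ toNQuasi.Im, ∀ (t : TmE Const Var) (φ : Fm Ag Const Var Atom),
    toNQuasi.tset φ ∈ N i w t → toNQuasi.tset (Fm.jbox i t φ) ∈ N i w (TmE.bang t)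
  NOcs : ∀ (i : Ag) (t : TmO Const Var) (φ : Fm Ag Const Var Atom),
    Fm.obox i t φ ∈ CS.csO → ∀ w ∈ toNQuasi.Im, toNQuasi.tset φ ∈ NO i w t
  NOapp : ∀ (i : Ag), ∀ w ∈ toNQuasi.Im, ∀ (t s : TmO Const Var) (φ ψ : Fm Ag Const Var Atom),
    toNQuasi.tset (φ.imp ψ) ∈ NO i w t → toNQuasi.tset φ ∈ NO i w s →
      toNQuasi.tset ψ ∈ NO i w (TmO.times t s)
  NOnoc : ∀ (i : Ag), ∀ w ∈ toNQuasi.Im, ∀ (t : TmO Const Var) (φ : Fm Ag Const Var Atom),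
    toNQuasi.tset φ ∈ NO i w t → toNQuasi.tset (Fm.neg φ) ∉ NO i w t
  NOfact : ∀ (i : Ag), ∀ w ∈ toNQuasi.Im, ∀ (t : TmO Const Var) (φ : Fm Ag Const Var Atom),
    toNQuasi.tset ((Fm.obox i t φ).imp φ) ∈ NO i w (TmO.ddag t)

/-- Truth at a point of an interpreted-neighborhood system. -/
abbrev NIS.SatP {S : Type} {CS : ConstSpec Ag Const Var Atom}
    (I : NIS Ag Const Var Atom S CS) :
    Fm Ag Const Var Atom → (ℕ → S) → ℕ → Prop :=
  I.toNQuasi.SatP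

/-- I ⊨ φ for an interpreted-neighborhood system. -/
def NIS.Valid {S : Type} {CS : ConstSpec Ag Const Var Atom}
    (I : NIS Ag Const Var Atom S CS) (φ : Fm Ag Const Var Atom) : Prop :=
  ∀ r ∈ I.R, ∀ n : ℕ, I.SatP φ r n

/-- ⊨^N_CS φ : validity in all interpreted-neighborhood systems for JTO_CS. -/
def NValid (CS : ConstSpec Ag Const Var Atom) (φ : Fm Ag Const Var Atom) : Prop :=
  ∀ (S : Type) (I : NIS Ag Const Var Atom S CS), I.Valid φ

/-- T ⊨^N_CS φ : local consequence over interpreted-neighborhood systems. -/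
def NConseq (CS : ConstSpec Ag Const Var Atom) (T : Set (Fm Ag Const Var Atom))
    (φ : Fm Ag Const Var Atom) : Prop :=
  ∀ (S : Type) (I : NIS Ag Const Var Atom S CS), ∀ r ∈ I.R, ∀ n : ℕ,
    (∀ ψ ∈ T, I.SatP ψ r n) → I.SatP φ r n

end JTO

/-!
The countermodel has a single run `n ↦ inr n` together with one off-run state `inl φ` for
every formula, at which exactly `φ` holds. Truth sets therefore determine formulas, so
deontic neighbourhoods can be assigned formula by formula: `x` obliges `p` and `y` obliges
`¬p`. No single term obliges both `φ` and `¬φ`, yet `O[x]p ∧ O[y]¬p` holds on the run.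
Epistemic neighbourhoods are the truth sets of formulas valid along the run, so the
epistemic constant specification is respected once the axioms are sound, which they are
because every state of the model lies on at most one point.
-/

namespace JTO

variable {Ag Const Var Atom : Type}

namespace NQuasi

variable {S : Type} {M : NQuasi Ag Const Var Atom S} {r : ℕ → S} {n : ℕ}
  {φ ψ : Fm Ag Const Var Atom}

theorem not_satP_bot : ¬ M.SatP Fm.bot r n := id

theorem satP_imp : M.SatP (φ.imp ψ) r n ↔ (M.SatP φ r n → M.SatP ψ r n) := Iff.rfl

theorem satP_next : M.SatP (Fm.next φ) r n ↔ M.SatP φ r (n + 1) := Iff.rfl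

theorem satP_wprev : M.SatP (Fm.wprev φ) r n ↔ n = 0 ∨ M.SatP φ r (n - 1) := Iff.rfl

theorem satP_untl : M.SatP (Fm.untl φ ψ) r n ↔
    ∃ m, n ≤ m ∧ M.SatP ψ r m ∧ ∀ k, n ≤ k → k < m → M.SatP φ r k := Iff.rfl

theorem satP_snce : M.SatP (Fm.snce φ ψ) r n ↔
    ∃ m, m ≤ n ∧ M.SatP ψ r m ∧ ∀ k, m < k → k ≤ n → M.SatP φ r k := Iff.rfl

theorem satP_jbox {i : Ag} {t : TmE Const Var} :
    M.SatP (Fm.jbox i t φ) r n ↔ M.tset φ ∈ M.N i (r n) t := Iff.rfl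

theorem satP_obox {i : Ag} {t : TmO Const Var} :
    M.SatP (Fm.obox i t φ) r n ↔ M.tset φ ∈ M.NO i (r n) t := Iff.rfl

theorem satP_neg : M.SatP (Fm.neg φ) r n ↔ ¬ M.SatP φ r n := Iff.rfl

theorem satP_disj : M.SatP (Fm.disj φ ψ) r n ↔ M.SatP φ r n ∨ M.SatP ψ r n := by
  simp only [Fm.disj, satP_imp, satP_neg]
  tauto

theorem satP_conj : M.SatP (Fm.conj φ ψ) r n ↔ M.SatP φ r n ∧ M.SatP ψ r n := by
  simp only [Fm.conj, satP_neg, satP_disj]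
  tauto

theorem satP_biim : M.SatP (Fm.biim φ ψ) r n ↔ (M.SatP φ r n ↔ M.SatP ψ r n) := by
  simp only [Fm.biim, satP_conj, satP_imp]
  tauto

theorem satP_sprev : M.SatP (Fm.sprev φ) r n ↔ n ≠ 0 ∧ M.SatP φ r (n - 1) := by
  simp only [Fm.sprev, satP_neg, satP_wprev]
  tauto

theorem satP_ev : M.SatP (Fm.ev φ) r n ↔ ∃ m, n ≤ m ∧ M.SatP φ r m := by
  simp [Fm.ev, Fm.top, satP_untl, satP_neg, not_satP_bot]

theorem satP_alw : M.SatP (Fm.alw φ) r n ↔ ∀ m, n ≤ m → M.SatP φ r m := by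
  simp [Fm.alw, satP_neg, satP_ev]

theorem satP_once : M.SatP (Fm.once φ) r n ↔ ∃ m, m ≤ n ∧ M.SatP φ r m := by
  simp [Fm.once, Fm.top, satP_snce, satP_neg, not_satP_bot]

theorem satP_sofar : M.SatP (Fm.sofar φ) r n ↔ ∀ m, m ≤ n → M.SatP φ r m := by
  simp [Fm.sofar, satP_neg, satP_once]

theorem satP_of_taut (h : Taut φ) : M.SatP φ r n := by
  classical
  refine of_decide_eq_true (h (fun a => decide (M.SatP a r n)) ?_ fun a b => ?_)
  · exact decide_eq_false id
  · by_cases ha : M.SatP a r n <;> by_cases hb : M.SatP b r n <;> simp [satP_imp, ha, hb]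

theorem satP_untl_iff_or_next :
    M.SatP (Fm.untl φ ψ) r n ↔
      M.SatP ψ r n ∨ M.SatP φ r n ∧ M.SatP (Fm.untl φ ψ) r (n + 1) := by
  simp only [satP_untl]
  constructor
  · rintro ⟨m, hnm, hψ, hφ⟩
    rcases hnm.eq_or_lt with rfl | hlt
    · exact .inl hψ
    · exact .inr ⟨hφ n le_rfl hlt, m, hlt, hψ, fun k hk => hφ k (by omega)⟩
  · rintro (hψ | ⟨hφ, m, hm, hψ, hφ'⟩)
    · exact ⟨n, le_rfl, hψ, fun k hk hk' => absurd hk' (by omega)⟩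
    · refine ⟨m, by omega, hψ, fun k hk hkm => ?_⟩
      rcases hk.eq_or_lt with rfl | hk
      · exact hφ
      · exact hφ' k hk hkm

theorem satP_snce_iff_or_sprev :
    M.SatP (Fm.snce φ ψ) r n ↔
      M.SatP ψ r n ∨ M.SatP φ r n ∧ n ≠ 0 ∧ M.SatP (Fm.snce φ ψ) r (n - 1) := by
  simp only [satP_snce]
  constructor
  · rintro ⟨m, hmn, hψ, hφ⟩
    rcases hmn.eq_or_lt with rfl | hlt
    · exact .inl hψ
    · exact .inr ⟨hφ n hlt le_rfl, by omega, m, by omega, hψ,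
        fun k hk hk' => hφ k hk (by omega)⟩
  · rintro (hψ | ⟨hφ, -, m, hm, hψ, hφ'⟩)
    · exact ⟨n, le_rfl, hψ, fun k hk hk' => absurd hk (by omega)⟩
    · refine ⟨m, by omega, hψ, fun k hmk hk => ?_⟩
      rcases hk.eq_or_lt with rfl | hk
      · exact hφ
      · exact hφ' k hmk (by omega)

theorem satP_alw_of_induction (hstep : M.SatP (Fm.alw (φ.imp (Fm.next φ))) r n)
    (hφ : M.SatP φ r n) : M.SatP (Fm.alw φ) r n := by
  rw [satP_alw] at hstep ⊢
  intro m hm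
  induction m, hm using Nat.le_induction with
  | base => exact hφ
  | succ m hm ih => exact hstep m hm ih

theorem satP_sofar_of_induction (hstep : M.SatP (Fm.sofar (φ.imp (Fm.wprev φ))) r n)
    (hφ : M.SatP φ r n) : M.SatP (Fm.sofar φ) r n := by
  rw [satP_sofar] at hstep ⊢
  intro m hm
  induction hm using Nat.decreasingInduction with
  | self => exact hφ
  | of_succ k hk ih => simpa using (hstep (k + 1) hk ih).resolve_left k.succ_ne_zero

def PointInjective (M : NQuasi Ag Const Var Atom S) : Prop :=
  ∀ r ∈ M.R, ∀ r' ∈ M.R, ∀ n n' : ℕ, r n = r' n' → r = r' ∧ n = n'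

theorem satP_of_mem_tset (hM : M.PointInjective) (hr : r ∈ M.R) (h : r n ∈ M.tset φ) :
    M.SatP φ r n := by
  rcases h with ⟨r', hr', n', he, h⟩ | ⟨hn, -⟩
  · obtain ⟨rfl, rfl⟩ := hM r' hr' r hr n' n he
    exact h
  · exact absurd ⟨r, hr, n, rfl⟩ hn

end NQuasi

open NQuasi

/-- Reflexivity only places the state `r n` in `⟦φ⟧`, while temporal truth depends on the
point; point-injectivity bridges the two for the factivity axiom. -/
theorem NIS.satP_of_isAxiom {S : Type} {CS : ConstSpec Ag Const Var Atom}
    (I : NIS Ag Const Var Atom S CS) (hI : I.PointInjective) {φ : Fm Ag Const Var Atom}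
    (hφ : IsAxiom φ) {r : ℕ → S} (hr : r ∈ I.R) (n : ℕ) : I.SatP φ r n := by
  have hw : r n ∈ I.Im := ⟨r, hr, n, rfl⟩
  cases hφ with
  | taut h => exact satP_of_taut h
  | nextK φ ψ => exact fun h₁ h₂ => h₁ h₂
  | alwK φ ψ =>
    simp only [satP_imp, satP_alw]
    exact fun h₁ h₂ m hm => h₁ m hm (h₂ m hm)
  | fn φ => exact satP_biim.2 Iff.rfl
  | ind φ => exact satP_alw_of_induction
  | untl1 φ ψ =>
    simp only [satP_imp, satP_ev, satP_untl]
    exact fun ⟨m, hnm, hψ, _⟩ => ⟨m, hnm, hψ⟩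
  | untl2 φ ψ =>
    simpa only [satP_biim, satP_disj, satP_conj, satP_next] using satP_untl_iff_or_next
  | sofarK φ ψ =>
    simp only [satP_imp, satP_sofar]
    exact fun h₁ h₂ m hm => h₁ m hm (h₂ m hm)
  | wprevK φ ψ =>
    simp only [satP_imp, satP_wprev]
    tauto
  | sw φ => exact fun h => .inr (satP_sprev.1 h).2
  | initial => exact satP_once.2 ⟨0, n.zero_le, .inl rfl⟩
  | sofarInd φ => exact satP_sofar_of_induction
  | snce1 φ ψ =>
    simp only [satP_imp, satP_once, satP_snce]
    exact fun ⟨m, hmn, hψ, _⟩ => ⟨m, hmn, hψ⟩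
  | snce2 φ ψ =>
    simpa only [satP_biim, satP_disj, satP_conj, satP_sprev] using satP_snce_iff_or_sprev
  | fp φ => exact fun h => satP_sprev.2 ⟨n.succ_ne_zero, h⟩
  | pf φ =>
    exact fun h => n.eq_zero_or_pos.imp id fun hn => by rwa [satP_next, Nat.sub_add_cancel hn]
  | app i t s φ ψ => exact I.Napp i _ hw t s φ ψ
  | sum1 i t s φ => exact fun h => (I.Nsum i _ hw s t φ h).2
  | sum2 i t s φ => exact fun h => (I.Nsum i _ hw t s φ h).1
  | fact i t φ => exact fun h => satP_of_mem_tset hI hr (I.Nrefl i _ hw t φ h)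
  | pos i t φ => exact I.Npos i _ hw t φ
  | appO i t s φ ψ => exact I.NOapp i _ hw t s φ ψ
  | noc i t φ => exact I.NOnoc i _ hw t φ
  | ofact i t φ => exact I.NOfact i _ hw t φ

theorem not_nValid_obox_imp_pbox {S : Type} {CS : ConstSpec Ag Const Var Atom}
    {I : NIS Ag Const Var Atom S CS} {r : ℕ → S} {n : ℕ} {i : Ag}
    {s t : TmO Const Var} {φ : Fm Ag Const Var Atom}
    (h : I.SatP (Fm.conj (Fm.obox i s φ) (Fm.obox i t (Fm.neg φ))) r n) (hr : r ∈ I.R) :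
    ¬ NValid CS ((Fm.obox i s φ).imp (Fm.pbox i t φ)) :=
  fun hvalid => hvalid S I r hr n (satP_conj.1 h).1 (satP_conj.1 h).2

def ConstSpec.empty : ConstSpec Ag Const Var Atom where
  set := ∅
  shape _ h := h.elim
  dcE _ _ _ h := h.elim
  dcO _ _ _ h := h.elim

section Countermodel

variable (x y : Var) (p : Atom)

/-- Application can only fire as `¬p · p`, since no obligation is a deontic assertion; hence
`⊥` is the only obligation a product of terms needs. -/
def obligations : TmO Const Var → Set (Fm Ag Const Var Atom)
  | .var v => {φ | v = x ∧ φ = .atom p ∨ v = y ∧ φ = Fm.neg (.atom p)}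
  | .const _ => ∅
  | .ddag t => {φ | ∃ j χ, φ = (Fm.obox j t χ).imp χ}
  | .times _ _ => {Fm.bot}

variable {x y p}

theorem obox_not_mem_obligations {j : Ag} {s t : TmO Const Var} {χ : Fm Ag Const Var Atom} :
    Fm.obox j s χ ∉ obligations x y p t := by
  cases t <;> simp [obligations, Fm.neg]

theorem obligations_app {t s : TmO Const Var} {φ ψ : Fm Ag Const Var Atom}
    (h₁ : φ.imp ψ ∈ obligations x y p t) (h₂ : φ ∈ obligations x y p s) :
    ψ ∈ obligations x y p (t.times s) := by
  cases t with
  | var v => simp_all [obligations, Fm.neg]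
  | const _ => exact h₁.elim
  | ddag t =>
    obtain ⟨j, χ, h⟩ := h₁
    cases h
    exact absurd h₂ obox_not_mem_obligations
  | times _ _ => cases h₁

theorem obligations_noc (hxy : x ≠ y) {t : TmO Const Var} {φ : Fm Ag Const Var Atom}
    (h : φ ∈ obligations x y p t) : Fm.neg φ ∉ obligations x y p t := by
  cases t with
  | var v =>
    rcases h with ⟨rfl, rfl⟩ | ⟨rfl, rfl⟩ <;> simp [obligations, Fm.neg, hxy, hxy.symm]
  | const _ => exact h.elim
  | ddag t =>
    obtain ⟨j, χ, rfl⟩ := h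
    simp [obligations, Fm.neg]
  | times _ _ =>
    cases h
    simp [obligations, Fm.neg]

variable (x y p)

def countermodel : NQuasi Ag Const Var Atom (Fm Ag Const Var Atom ⊕ ℕ) where
  R := {Sum.inr}
  N _ _ _ := {A | Set.range Sum.inr ⊆ A}
  NO _ _ t := {A | ∃ φ ∈ obligations x y p t, Sum.inl ⁻¹' A = {φ}}
  val _ := ∅
  valF := Sum.elim (fun φ => {φ}) fun _ => ∅

variable {x y p}

theorem countermodel_im :
    (countermodel (Ag := Ag) (Const := Const) x y p).Im = Set.range Sum.inr := by
  ext w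
  simp [NQuasi.Im, countermodel, eq_comm]

theorem inl_mem_tset_countermodel {φ χ : Fm Ag Const Var Atom} :
    Sum.inl χ ∈ (countermodel x y p).tset φ ↔ φ = χ := by
  simp only [NQuasi.tset, NQuasi.SatS, Set.mem_ofPred_eq, countermodel_im]
  simp [countermodel]

theorem inr_mem_tset_countermodel {φ : Fm Ag Const Var Atom} {n : ℕ} :
    Sum.inr n ∈ (countermodel x y p).tset φ ↔ (countermodel x y p).SatP φ Sum.inr n := by
  simp only [NQuasi.tset, NQuasi.SatS, Set.mem_ofPred_eq, countermodel_im]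
  simp [countermodel]

theorem pointInjective_countermodel :
    (countermodel (Ag := Ag) (Const := Const) x y p).PointInjective := by
  rintro r rfl r' rfl n n' h
  exact ⟨rfl, Sum.inr_injective h⟩

theorem tset_mem_N_countermodel {i : Ag} {w : Fm Ag Const Var Atom ⊕ ℕ} {t : TmE Const Var}
    {φ : Fm Ag Const Var Atom} :
    (countermodel x y p).tset φ ∈ (countermodel x y p).N i w t ↔
      ∀ m, (countermodel x y p).SatP φ Sum.inr m :=
  Set.range_subset_iff.trans (forall_congr' fun _ => inr_mem_tset_countermodel)

theorem tset_mem_NO_countermodel {i : Ag} {w : Fm Ag Const Var Atom ⊕ ℕ} {t : TmO Const Var}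
    {φ : Fm Ag Const Var Atom} :
    (countermodel x y p).tset φ ∈ (countermodel x y p).NO i w t ↔
      φ ∈ obligations x y p t := by
  have hcode : Sum.inl ⁻¹' (countermodel x y p).tset φ = {φ} := by
    ext χ
    exact inl_mem_tset_countermodel.trans eq_comm
  change (∃ ψ ∈ obligations x y p t, _ = ({ψ} : Set (Fm Ag Const Var Atom))) ↔ _
  simp [hcode]

variable (p) in
def countermodelNISEmpty (hxy : x ≠ y) :
    NIS Ag Const Var Atom (Fm Ag Const Var Atom ⊕ ℕ) ConstSpec.empty where
  toNQuasi := countermodel x y p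
  Sne := ⟨.inr 0⟩
  Rne := ⟨Sum.inr, rfl⟩
  Ncs _ _ _ h := h.1.elim
  Napp i w _ t s φ ψ := by
    simp only [tset_mem_N_countermodel, satP_imp]
    exact fun h₁ h₂ m => h₁ m (h₂ m)
  Nsum _ _ _ _ _ _ h := ⟨h, h⟩
  Nrefl i w hw t φ h := by
    rw [countermodel_im] at hw
    obtain ⟨n, rfl⟩ := hw
    exact inr_mem_tset_countermodel.2 (tset_mem_N_countermodel.1 h n)
  Npos i w _ t φ h := tset_mem_N_countermodel.2 fun _ => satP_jbox.2 h
  NOcs _ _ _ h := h.1.elim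
  NOapp i w _ t s φ ψ := by
    simp only [tset_mem_NO_countermodel]
    exact obligations_app
  NOnoc i w _ t φ := by
    simp only [tset_mem_NO_countermodel]
    exact obligations_noc hxy
  NOfact i w _ t φ := tset_mem_NO_countermodel.2 ⟨i, φ, rfl⟩

theorem countermodel_satP_of_eIter (hxy : x ≠ y) {φ : Fm Ag Const Var Atom} (h : EIter φ)
    (n : ℕ) : (countermodel x y p).SatP φ Sum.inr n := by
  induction h generalizing n with
  | base hφ => exact tset_mem_N_countermodel.2 fun m =>
      (countermodelNISEmpty p hxy).satP_of_isAxiom pointInjective_countermodel hφ rfl m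
  | step _ ih => exact tset_mem_N_countermodel.2 ih

variable (p) in
/-- Since the model was first built for the empty constant specification, soundness of the
axioms is available to verify the epistemic constant specification of `CS`. -/
def countermodelNIS (CS : ConstSpec Ag Const Var Atom) (hCS : CS.csO = ∅) (hxy : x ≠ y) :
    NIS Ag Const Var Atom (Fm Ag Const Var Atom ⊕ ℕ) CS :=
  { countermodelNISEmpty p hxy with
    Ncs := fun _ _ _ h _ _ => satP_jbox.1 (countermodel_satP_of_eIter hxy h.2 0)
    NOcs := fun _ _ _ h => by simp [hCS] at h }

end Countermodel

theorem strong_no_conflicts_fails_general (Ag Const Var Atom : Type)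
    (CS : ConstSpec Ag Const Var Atom) (hCS : CS.csO = ∅)
    (x y : Var) (hxy : x ≠ y) (p : Atom) (i : Ag) :
    ∃ (φ : Fm Ag Const Var Atom) (s t : TmO Const Var) (j : Ag),
      ¬ NValid CS ((Fm.obox j s φ).imp (Fm.pbox j t φ)) ∧
      ∃ (S : Type) (I : NIS Ag Const Var Atom S CS), ∃ r ∈ I.R, ∃ n : ℕ,
        I.SatP (Fm.conj (Fm.obox j s φ) (Fm.obox j t (Fm.neg φ))) r n := by
  have hconflict : (countermodelNIS p CS hCS hxy).SatP
      (Fm.conj (Fm.obox i (.var x) (.atom p)) (Fm.obox i (.var y) (Fm.neg (.atom p))))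
      Sum.inr 0 :=
    satP_conj.2 ⟨satP_obox.2 (tset_mem_NO_countermodel.2 (Or.inl ⟨rfl, rfl⟩)),
      satP_obox.2 (tset_mem_NO_countermodel.2 (Or.inr ⟨rfl, rfl⟩))⟩
  exact ⟨_, _, _, i, not_nValid_obox_imp_pbox hconflict rfl, _, _, _, rfl, 0, hconflict⟩

/-- if CS^O = ∅, the strong no-conflicts principle
O[s]ᵢφ → P[t]ᵢφ is not valid over interpreted-neighborhood systems; equivalently,
some interpreted-neighborhood system for JTO_CS satisfies O[s]ᵢφ ∧ O[t]ᵢ¬φ at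
some point. -/
theorem strong_no_conflicts_fails (Ag Const Var Atom : Type)
    [Fintype Ag] [Nonempty Ag] [Countable Const] [Countable Var] [Countable Atom]
    (CS : ConstSpec Ag Const Var Atom) (hCS : CS.csO = ∅)
    (x y : Var) (hxy : x ≠ y) (p : Atom) (i : Ag) :
    ∃ (φ : Fm Ag Const Var Atom) (s t : TmO Const Var) (j : Ag),
      ¬ NValid CS ((Fm.obox j s φ).imp (Fm.pbox j t φ)) ∧
      ∃ (S : Type) (I : NIS Ag Const Var Atom S CS), ∃ r ∈ I.R, ∃ n : ℕ,
        I.SatP (Fm.conj (Fm.obox j s φ) (Fm.obox j t (Fm.neg φ))) r n :=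
  strong_no_conflicts_fails_general Ag Const Var Atom CS hCS x y hxy p i

end JTO
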